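/- Let X and Z be independent random variables on a probability space with values in measurable spaces E and F respectively, and let Z' be a random variable with the same distribution as Z such that X, Z and Z' are mutually independent. Let f : E × F → ℝ be measurable with f(X,Z) square-integrable. Setting Y = f(X,Z) and Y^X = f(X,Z'), one has Var(E[Y | X]) = Cov(Y, Y^X). -/

import Mathlib

/-!
With `ν` the law of `Z` and `g x = ∫ f (x, z) dν(z)`, independence of `X` and `Z` gives
`E[f(X,Z) | X] = g(X)`. Integrating out `Z'`, which is independent of `(X, Z)` and has law `ν`,
gives `E[f(X,Z) f(X,Z')] = E[f(X,Z) g(X)]`, and integrating out `Z` then gives `E[g(X)²]`.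
Since `(X, Z')` has the law of `(X, Z)`, both `Y` and `Yˣ` have mean `E[g(X)]`.
-/

open MeasureTheory ProbabilityTheory

namespace ProbabilityTheory

variable {Ω E F G : Type*} {mΩ : MeasurableSpace Ω} [MeasurableSpace E] [MeasurableSpace F]
  [NormedAddCommGroup G] [NormedSpace ℝ G] [CompleteSpace G]
  {μ : Measure Ω} [IsFiniteMeasure μ] {X : Ω → E} {Z : Ω → F} {f : E × F → G}

theorem IndepFun.condExp_prod_ae_eq_integral (hXZ : X ⟂ᵢ[μ] Z) (hX : Measurable X)
    (hZ : Measurable Z) (hf : StronglyMeasurable f)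
    (hint : Integrable (fun ω => f (X ω, Z ω)) μ) :
    μ[fun ω => f (X ω, Z ω) | MeasurableSpace.comap X inferInstance] =ᵐ[μ]
      fun ω => ∫ z, f (X ω, z) ∂(μ.map Z) := by
  have hlaw := hXZ.map_prod_eq_prod_map_map hX.aemeasurable hZ.aemeasurable
  have hf_int : Integrable f ((μ.map X).prod (μ.map Z)) := by
    rwa [← hlaw, integrable_map_measure hf.aestronglyMeasurable (hX.prodMk hZ).aemeasurable]
  have hg : StronglyMeasurable fun x => ∫ z, f (x, z) ∂(μ.map Z) :=
    hf.integral_prod_right'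
  have hgX_int : Integrable (fun ω => ∫ z, f (X ω, z) ∂(μ.map Z)) μ :=
    (integrable_map_measure hg.aestronglyMeasurable hX.aemeasurable).mp
      hf_int.integral_prod_left
  refine (ae_eq_condExp_of_forall_setIntegral_eq hX.comap_le hint
    (fun s _ _ => hgX_int.integrableOn) ?_
    (hg.comp_measurable (Measurable.of_comap_le le_rfl)).aestronglyMeasurable).symm
  rintro s ⟨t, ht, rfl⟩ -
  have hfubini : ∫ x in t, ∫ z, f (x, z) ∂(μ.map Z) ∂(μ.map X) =
      ∫ p in t ×ˢ Set.univ, f p ∂((μ.map X).prod (μ.map Z)) := by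
    rw [setIntegral_prod _ hf_int.integrableOn, Measure.restrict_univ]
  rw [← setIntegral_map ht hg.aestronglyMeasurable hX.aemeasurable, hfubini, ← hlaw,
    setIntegral_map (ht.prod .univ) hf.aestronglyMeasurable (hX.prodMk hZ).aemeasurable,
    Set.mk_preimage_prod, Set.preimage_univ, Set.inter_univ]

theorem IndepFun.integral_prod_eq_integral_integral (hXZ : X ⟂ᵢ[μ] Z) (hX : Measurable X)
    (hZ : Measurable Z) (hf : StronglyMeasurable f)
    (hint : Integrable (fun ω => f (X ω, Z ω)) μ) :
    ∫ ω, f (X ω, Z ω) ∂μ = ∫ ω, ∫ z, f (X ω, z) ∂(μ.map Z) ∂μ := by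
  rw [← integral_condExp hX.comap_le,
    integral_congr_ae (hXZ.condExp_prod_ae_eq_integral hX hZ hf hint)]

end ProbabilityTheory

/-- **Pick-and-Freeze identity.** Let `X` and `Z` be independent random variables with values
in measurable spaces `E` and `F`, and let `Z'` have the same distribution as `Z`, with
`X, Z, Z'` mutually independent (encoded as: `X ⟂ Z` and `(X, Z) ⟂ Z'`).  For a measurable
`f : E × F → ℝ` with `Y = f(X,Z)` square-integrable, one has
`Var(E[Y | X]) = Cov(Y, Yˣ)` where `Yˣ = f(X, Z')` and
`Cov(U,V) = E[UV] − E[U]·E[V]`. -/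
theorem pick_and_freeze
    {Ω E F : Type*} [MeasurableSpace Ω] [MeasurableSpace E] [MeasurableSpace F]
    (μ : Measure Ω) [IsProbabilityMeasure μ]
    (X : Ω → E) (Z Z' : Ω → F)
    (hX : Measurable X) (hZ : Measurable Z) (hZ' : Measurable Z')
    (hlaw : Measure.map Z' μ = Measure.map Z μ)
    (hXZ : IndepFun X Z μ)
    (hXZ_Z' : IndepFun (fun ω => (X ω, Z ω)) Z' μ)
    (f : E × F → ℝ) (hf : Measurable f)
    (hY2 : MemLp (fun ω => f (X ω, Z ω)) 2 μ) :
    variance (μ[(fun ω => f (X ω, Z ω)) | MeasurableSpace.comap X inferInstance]) μ =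
      (∫ ω, f (X ω, Z ω) * f (X ω, Z' ω) ∂μ)
        - (∫ ω, f (X ω, Z ω) ∂μ) * (∫ ω, f (X ω, Z' ω) ∂μ) := by
  set g : E → ℝ := fun x => ∫ z, f (x, z) ∂(μ.map Z)
  have hg : Measurable g := hf.stronglyMeasurable.integral_prod_right'.measurable
  have hY : Integrable (fun ω => f (X ω, Z ω)) μ := hY2.integrable one_le_two
  have hce : μ[fun ω => f (X ω, Z ω) | MeasurableSpace.comap X inferInstance] =ᵐ[μ]
      fun ω => g (X ω) :=
    hXZ.condExp_prod_ae_eq_integral hX hZ hf.stronglyMeasurable hY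
  have hgX2 : MemLp (fun ω => g (X ω)) 2 μ := (hY2.condExp one_le_two).ae_eq hce
  have hid : IdentDistrib (fun ω => f (X ω, Z' ω)) (fun ω => f (X ω, Z ω)) μ μ :=
    ((IdentDistrib.refl hX.aemeasurable).prodMk ⟨hZ'.aemeasurable, hZ.aemeasurable, hlaw⟩
      (hXZ_Z'.comp measurable_fst measurable_id) hXZ).comp hf
  have hmean : ∫ ω, g (X ω) ∂μ = ∫ ω, f (X ω, Z ω) ∂μ :=
    (hXZ.integral_prod_eq_integral_integral hX hZ hf.stronglyMeasurable hY).symm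
  have hintegrate_Z' :
      ∫ ω, f (X ω, Z ω) * f (X ω, Z' ω) ∂μ = ∫ ω, f (X ω, Z ω) * g (X ω) ∂μ := by
    rw [hXZ_Z'.integral_prod_eq_integral_integral (f := fun q => f q.1 * f (q.1.1, q.2))
      (hX.prodMk hZ) hZ' (by fun_prop) (hY2.integrable_mul (hid.memLp_iff.mpr hY2)), hlaw]
    simp_rw [integral_const_mul]
    rfl
  have hintegrate_Z : ∫ ω, f (X ω, Z ω) * g (X ω) ∂μ = ∫ ω, g (X ω) ^ 2 ∂μ := by
    rw [hXZ.integral_prod_eq_integral_integral (f := fun p => f p * g p.1) hX hZ (by fun_prop)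
      (hY2.integrable_mul hgX2)]
    simp_rw [integral_mul_const, sq]
    rfl
  rw [variance_congr hce, variance_eq_sub hgX2, hmean, hid.integral_eq, hintegrate_Z',
    hintegrate_Z]
  simp only [Pi.pow_apply]
  ring
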